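/- Let d ≥ 0 and let v, B*, B : ℝ × ℝ³ → ℝ³ and p : ℝ × ℝ³ → ℝ be smooth, with, for every time t: div v(t,·) = 0, div B*(t,·) = 0, div B(t,·) = 0, B* = B + curl(curl B), and the incompressible extended MHD equations ∂ₜv + (v·∇)v + ∇p + B* × (curl B) = 0 and ∂ₜB* + curl(B* × (v − d·curl B)) + curl((curl v) × (curl B)) = 0 holding pointwise. Let κ ∈ ℝ satisfy κ² = d·κ + 1 (so κ ≠ 0), and define B^κ := B* + κ·curl v and v^κ := v + κ⁻¹·curl B. Then ∂ₜB^κ + curl(B^κ × v^κ) = 0, i.e. incompressible extended MHD recasts as a transport-type equation for B^κ along v^κ. -/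

import Mathlib

noncomputable section

open MeasureTheory Real

/-- Euclidean 3-space. -/
abbrev E3 : Type := EuclideanSpace ℝ (Fin 3)

/-- Build a vector in `E3` from three coordinates. -/
def mk3 (a b c : ℝ) : E3 := (WithLp.equiv 2 (Fin 3 → ℝ)).symm ![a, b, c]

/-- Partial derivative in the `i`-th coordinate direction. -/
def pd (i : Fin 3) (f : E3 → ℝ) (x : E3) : ℝ :=
  fderiv ℝ f x (EuclideanSpace.single i 1)

/-- Curl of a vector field on `ℝ³`. -/
def ecurl (f : E3 → E3) (x : E3) : E3 :=
  mk3 (pd 1 (fun y => f y 2) x - pd 2 (fun y => f y 1) x)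
      (pd 2 (fun y => f y 0) x - pd 0 (fun y => f y 2) x)
      (pd 0 (fun y => f y 1) x - pd 1 (fun y => f y 0) x)

/-- Divergence of a vector field on `ℝ³`. -/
def ediv (f : E3 → E3) (x : E3) : ℝ :=
  pd 0 (fun y => f y 0) x + pd 1 (fun y => f y 1) x + pd 2 (fun y => f y 2) x

/-- Gradient of a scalar field on `ℝ³`. -/
def egrad (h : E3 → ℝ) (x : E3) : E3 :=
  mk3 (pd 0 h x) (pd 1 h x) (pd 2 h x)

/-- Cross product on `ℝ³`. -/
def cross3 (u w : E3) : E3 :=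
  mk3 (u 1 * w 2 - u 2 * w 1) (u 2 * w 0 - u 0 * w 2) (u 0 * w 1 - u 1 * w 0)

/-- Advection `(g · ∇) f` of a vector field `f` along the vector `g`. -/
def advect (g : E3) (f : E3 → E3) (x : E3) : E3 :=
  mk3 (∑ j, g j * pd j (fun y => f y 0) x)
      (∑ j, g j * pd j (fun y => f y 1) x)
      (∑ j, g j * pd j (fun y => f y 2) x)

/-- Componentwise Laplacian of a vector field on `ℝ³`. -/
def elap (f : E3 → E3) (x : E3) : E3 :=
  mk3 (∑ i, pd i (fun y => pd i (fun z => f z 0) y) x)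
      (∑ i, pd i (fun y => pd i (fun z => f z 1) y) x)
      (∑ i, pd i (fun y => pd i (fun z => f z 2) y) x)

/-- Time derivative of a time-dependent vector field. -/
def tderiv (f : ℝ → E3 → E3) (t : ℝ) (x : E3) : E3 :=
  deriv (fun s => f s x) t

/-! ### Auxiliary lemmas -/

@[simp] lemma mk3_apply0 (a b c : ℝ) : mk3 a b c 0 = a := rfl
@[simp] lemma mk3_apply1 (a b c : ℝ) : mk3 a b c 1 = b := rfl
@[simp] lemma mk3_apply2 (a b c : ℝ) : mk3 a b c 2 = c := rfl

lemma mk3_eq_single (a b c : ℝ) :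
    mk3 a b c = a • EuclideanSpace.single (0 : Fin 3) (1 : ℝ)
      + b • EuclideanSpace.single 1 1 + c • EuclideanSpace.single 2 1 := by
  ext i; fin_cases i <;> simp [mk3, EuclideanSpace.single_apply]

section pdCalc

variable {f g : E3 → ℝ} {x : E3} {j : Fin 3}

lemma pd_add (hf : DifferentiableAt ℝ f x) (hg : DifferentiableAt ℝ g x) :
    pd j (fun y => f y + g y) x = pd j f x + pd j g x := by
  unfold pd; rw [fderiv_fun_add hf hg]; rfl

lemma pd_sub (hf : DifferentiableAt ℝ f x) (hg : DifferentiableAt ℝ g x) :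
    pd j (fun y => f y - g y) x = pd j f x - pd j g x := by
  unfold pd; rw [fderiv_fun_sub hf hg]; rfl

lemma pd_neg : pd j (fun y => -f y) x = - pd j f x := by
  unfold pd; rw [fderiv_fun_neg]; rfl

lemma pd_mul (hf : DifferentiableAt ℝ f x) (hg : DifferentiableAt ℝ g x) :
    pd j (fun y => f y * g y) x = f x * pd j g x + g x * pd j f x := by
  unfold pd; rw [fderiv_fun_mul hf hg]; rfl

lemma pd_const_mul (c : ℝ) (hf : DifferentiableAt ℝ f x) :
    pd j (fun y => c * f y) x = c * pd j f x := by
  unfold pd; rw [fderiv_const_mul hf]; rfl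

lemma pd_contDiff (hf : ContDiff ℝ (⊤ : ℕ∞) f) (j : Fin 3) : ContDiff ℝ (⊤ : ℕ∞) (fun y => pd j f y) := by
  have h1 : ContDiff ℝ (⊤ : ℕ∞) (fderiv ℝ f) := hf.fderiv_right (m := (⊤ : ℕ∞)) (by simp)
  exact (ContinuousLinearMap.apply ℝ ℝ (EuclideanSpace.single j 1)).contDiff.comp h1

lemma fderiv_apply_const (hf : ContDiff ℝ (⊤ : ℕ∞) f) (u w x' : E3) :
    fderiv ℝ (fun y => fderiv ℝ f y u) x' w = fderiv ℝ (fderiv ℝ f) x' w u := by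
  have hd : DifferentiableAt ℝ (fderiv ℝ f) x' :=
    ((hf.fderiv_right (m := (⊤ : ℕ∞)) (by simp)).differentiable (by simp)).differentiableAt
  rw [fderiv_clm_apply hd (differentiableAt_const u)]
  simp

lemma pd_comm (hf : ContDiff ℝ (⊤ : ℕ∞) f) (i j : Fin 3) (x : E3) :
    pd i (fun y => pd j f y) x = pd j (fun y => pd i f y) x := by
  have hsymm : IsSymmSndFDerivAt ℝ f x :=
    hf.contDiffAt.isSymmSndFDerivAt (by simp; exact WithTop.coe_le_coe.mpr le_top)
  unfold pd
  rw [fderiv_apply_const hf, fderiv_apply_const hf, hsymm]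

end pdCalc

section swap

open ContinuousLinearMap

variable {G : ℝ × E3 → ℝ}

lemma slice_x (hG : ContDiff ℝ (⊤ : ℕ∞) G) (s : ℝ) (y : E3) (j : Fin 3) :
    pd j (fun y' => G (s, y')) y = fderiv ℝ G (s, y) (0, EuclideanSpace.single j 1) := by
  have h1 : HasFDerivAt (fun y' : E3 => G (s, y'))
      ((fderiv ℝ G (s, y)).comp (inr ℝ ℝ E3)) y :=
    ((hG.differentiable (by simp) (s, y)).hasFDerivAt).comp y (hasFDerivAt_prodMk_right s y)
  unfold pd
  rw [h1.fderiv]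
  rfl

lemma slice_t (hG : ContDiff ℝ (⊤ : ℕ∞) G) (s : ℝ) (y : E3) :
    deriv (fun s' => G (s', y)) s = fderiv ℝ G (s, y) (1, 0) := by
  have h1 : HasDerivAt (fun s' : ℝ => G (s', y)) (fderiv ℝ G (s, y) (1, 0)) s := by
    have := ((hG.differentiable (by simp) (s, y)).hasFDerivAt).comp_hasDerivAt s
      ((hasFDerivAt_prodMk_left s y).hasDerivAt)
    simpa [Function.comp_def] using this
  exact h1.deriv

lemma fderiv_apply_const' (hG : ContDiff ℝ (⊤ : ℕ∞) G) (u w : ℝ × E3) (q : ℝ × E3) :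
    fderiv ℝ (fun r => fderiv ℝ G r u) q w = fderiv ℝ (fderiv ℝ G) q w u := by
  have hd : DifferentiableAt ℝ (fderiv ℝ G) q :=
    ((hG.fderiv_right (m := (⊤ : ℕ∞)) (by simp)).differentiable (by simp)).differentiableAt
  rw [fderiv_clm_apply hd (differentiableAt_const u)]
  simp

/-- Core swap lemma: the time derivative of a spatial partial derivative equals the spatial
partial derivative of the time derivative, in `HasDerivAt` form. -/
lemma swap_core (hG : ContDiff ℝ (⊤ : ℕ∞) G) (t : ℝ) (x : E3) (j : Fin 3) :
    HasDerivAt (fun s => pd j (fun y => G (s, y)) x)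
      (pd j (fun y => deriv (fun s' => G (s', y)) t) x) t := by
  have hfd : ContDiff ℝ (⊤ : ℕ∞) (fun q : ℝ × E3 => fderiv ℝ G q (0, EuclideanSpace.single j 1)) := by
    have h := (ContinuousLinearMap.apply ℝ ℝ (((0 : ℝ), EuclideanSpace.single j 1) :
      ℝ × E3)).contDiff.comp (hG.fderiv_right (m := (⊤ : ℕ∞)) (by simp))
    exact h
  have hsymm : IsSymmSndFDerivAt ℝ G (t, x) :=
    hG.contDiffAt.isSymmSndFDerivAt (by simp; exact WithTop.coe_le_coe.mpr le_top)
  have e1 : (fun s => pd j (fun y => G (s, y)) x)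
      = fun s => fderiv ℝ G (s, x) (0, EuclideanSpace.single j 1) := by
    funext s; exact slice_x hG s x j
  have e2 : pd j (fun y => deriv (fun s' => G (s', y)) t) x
      = pd j (fun y => fderiv ℝ G (t, y) (1, 0)) x := by
    congr 1; funext y; exact slice_t hG t y
  rw [e1, e2]
  have hK : ContDiff ℝ (⊤ : ℕ∞) (fun q : ℝ × E3 => fderiv ℝ G q (1, 0)) := by
    have h := (ContinuousLinearMap.apply ℝ ℝ (((1 : ℝ), (0 : E3)) :
      ℝ × E3)).contDiff.comp (hG.fderiv_right (m := (⊤ : ℕ∞)) (by simp))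
    exact h
  have h1 : HasDerivAt (fun s => fderiv ℝ G (s, x) (0, EuclideanSpace.single j 1))
      (fderiv ℝ (fun q => fderiv ℝ G q (0, EuclideanSpace.single j 1)) (t, x) (1, 0)) t := by
    have := ((hfd.differentiable (by simp) ((t : ℝ), x)).hasFDerivAt).comp_hasDerivAt t
      ((hasFDerivAt_prodMk_left t x).hasDerivAt)
    simpa [Function.comp_def] using this
  convert h1 using 1
  rw [slice_x hK t x j, fderiv_apply_const' hG, fderiv_apply_const' hG, hsymm]

end swap

section slices

variable {f : ℝ → E3 → E3} {p : ℝ → E3 → ℝ}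

lemma contDiff_Fk (hf : ContDiff ℝ (⊤ : ℕ∞) ↿f) (k : Fin 3) :
    ContDiff ℝ (⊤ : ℕ∞) (fun q : ℝ × E3 => f q.1 q.2 k) := by
  have h := (EuclideanSpace.proj (𝕜 := ℝ) k).contDiff.comp hf
  exact h

lemma contDiff_slice (hf : ContDiff ℝ (⊤ : ℕ∞) ↿f) (t : ℝ) (k : Fin 3) :
    ContDiff ℝ (⊤ : ℕ∞) (fun y => f t y k) := by
  have h := (contDiff_Fk hf k).comp (ContDiff.prodMk (contDiff_const (c := t)) contDiff_id)
  exact h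

lemma contDiff_pslice (hp : ContDiff ℝ (⊤ : ℕ∞) ↿p) (t : ℝ) :
    ContDiff ℝ (⊤ : ℕ∞) (p t) := by
  have h := hp.comp (ContDiff.prodMk (contDiff_const (c := t)) (contDiff_id (E := E3)))
  exact h

lemma contDiff_tslice (hf : ContDiff ℝ (⊤ : ℕ∞) ↿f) (x : E3) :
    ContDiff ℝ (⊤ : ℕ∞) (fun s => f s x) := by
  have h := hf.comp (ContDiff.prodMk (contDiff_id (E := ℝ)) (contDiff_const (c := x)))
  exact h

lemma deriv_comp_proj {F : ℝ → E3} {t : ℝ} (hF : DifferentiableAt ℝ F t) (k : Fin 3) :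
    deriv (fun s => F s k) t = deriv F t k := by
  have h := (EuclideanSpace.proj (𝕜 := ℝ) k).hasFDerivAt.comp_hasDerivAt t hF.hasDerivAt
  simpa [Function.comp_def] using h.deriv

end slices

section ecurlCalc

variable {f g : E3 → E3} {x : E3}

lemma ecurl_add (hf : ∀ k, DifferentiableAt ℝ (fun y => f y k) x)
    (hg : ∀ k, DifferentiableAt ℝ (fun y => g y k) x) :
    ecurl (fun y => f y + g y) x = ecurl f x + ecurl g x := by
  have e : ∀ (k j : Fin 3),
      pd j (fun y => f y k + g y k) x = pd j (fun y => f y k) x + pd j (fun y => g y k) x :=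
    fun k j => pd_add (hf k) (hg k)
  unfold ecurl
  ext i; fin_cases i <;> simp [e] <;> ring

lemma ecurl_smul (r : ℝ) (hf : ∀ k, DifferentiableAt ℝ (fun y => f y k) x) :
    ecurl (fun y => r • f y) x = r • ecurl f x := by
  have e : ∀ (k j : Fin 3),
      pd j (fun y => r * f y k) x = r * pd j (fun y => f y k) x :=
    fun k j => pd_const_mul r (hf k)
  unfold ecurl
  ext i; fin_cases i <;> simp [e] <;> ring

lemma ecurl_sub (hf : ∀ k, DifferentiableAt ℝ (fun y => f y k) x)
    (hg : ∀ k, DifferentiableAt ℝ (fun y => g y k) x) :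
    ecurl (fun y => f y - g y) x = ecurl f x - ecurl g x := by
  have e : ∀ (k j : Fin 3),
      pd j (fun y => f y k - g y k) x = pd j (fun y => f y k) x - pd j (fun y => g y k) x :=
    fun k j => pd_sub (hf k) (hg k)
  unfold ecurl
  ext i; fin_cases i <;> simp [e] <;> ring

lemma ecurl_neg :
    ecurl (fun y => -f y) x = - ecurl f x := by
  have e : ∀ (k j : Fin 3),
      pd j (fun y => -f y k) x = - pd j (fun y => f y k) x :=
    fun k j => pd_neg
  unfold ecurl
  ext i; fin_cases i <;> simp [e] <;> ring

lemma ecurl_grad {h : E3 → ℝ} (hh : ContDiff ℝ (⊤ : ℕ∞) h) (x : E3) :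
    ecurl (fun y => egrad h y) x = 0 := by
  unfold ecurl egrad
  ext i
  fin_cases i <;> simp <;> rw [pd_comm hh] <;> ring

lemma ecurl_comp_contDiff (hf : ∀ k, ContDiff ℝ (⊤ : ℕ∞) (fun y => f y k)) (k : Fin 3) :
    ContDiff ℝ (⊤ : ℕ∞) (fun y => ecurl f y k) := by
  fin_cases k
  · exact (pd_contDiff (hf 2) 1).sub (pd_contDiff (hf 1) 2)
  · exact (pd_contDiff (hf 0) 2).sub (pd_contDiff (hf 2) 0)
  · exact (pd_contDiff (hf 1) 0).sub (pd_contDiff (hf 0) 1)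

lemma cross3_comp_contDiff (hf : ∀ k, ContDiff ℝ (⊤ : ℕ∞) (fun y => f y k))
    (hg : ∀ k, ContDiff ℝ (⊤ : ℕ∞) (fun y => g y k)) (k : Fin 3) :
    ContDiff ℝ (⊤ : ℕ∞) (fun y => cross3 (f y) (g y) k) := by
  fin_cases k
  · exact ((hf 1).mul (hg 2)).sub ((hf 2).mul (hg 1))
  · exact ((hf 2).mul (hg 0)).sub ((hf 0).mul (hg 2))
  · exact ((hf 0).mul (hg 1)).sub ((hf 1).mul (hg 0))

lemma egrad_comp_contDiff {h : E3 → ℝ} (hh : ContDiff ℝ (⊤ : ℕ∞) h) (k : Fin 3) :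
    ContDiff ℝ (⊤ : ℕ∞) (fun y => egrad h y k) := by
  fin_cases k
  · exact pd_contDiff hh 0
  · exact pd_contDiff hh 1
  · exact pd_contDiff hh 2

end ecurlCalc

/-- The Bernoulli identity `(u·∇)u = ∇(|u|²/2) + (curl u) × u`. -/
lemma advect_eq {u : E3 → E3} (hu : ∀ k, ContDiff ℝ (⊤ : ℕ∞) (fun y => u y k)) (y : E3) :
    advect (u y) u y
      = egrad (fun z => 2⁻¹ * (u z 0 * u z 0 + u z 1 * u z 1 + u z 2 * u z 2)) y
        + cross3 (ecurl u y) (u y) := by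
  have d : ∀ (k : Fin 3) (z : E3), DifferentiableAt ℝ (fun w => u w k) z :=
    fun k z => ((hu k).differentiable (by simp)).differentiableAt
  have hq : ∀ j : Fin 3,
      pd j (fun z => 2⁻¹ * (u z 0 * u z 0 + u z 1 * u z 1 + u z 2 * u z 2)) y
      = u y 0 * pd j (fun z => u z 0) y + u y 1 * pd j (fun z => u z 1) y
        + u y 2 * pd j (fun z => u z 2) y := by
    intro j
    rw [pd_const_mul _ ((((d 0 y).fun_mul (d 0 y)).fun_add ((d 1 y).fun_mul (d 1 y))).fun_add
      ((d 2 y).fun_mul (d 2 y))),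
      pd_add (((d 0 y).fun_mul (d 0 y)).fun_add ((d 1 y).fun_mul (d 1 y))) ((d 2 y).fun_mul (d 2 y)),
      pd_add ((d 0 y).fun_mul (d 0 y)) ((d 1 y).fun_mul (d 1 y)),
      pd_mul (d 0 y) (d 0 y), pd_mul (d 1 y) (d 1 y), pd_mul (d 2 y) (d 2 y)]
    ring
  unfold advect
  ext i
  fin_cases i <;>
    simp [Fin.sum_univ_three, egrad, cross3, ecurl, hq] <;> ring

set_option maxHeartbeats 1000000 in
/-- Transport form of incompressible extended MHD: if `κ² = dκ + 1`, then
`B^κ := B* + κ curl v` and `v^κ := v + κ⁻¹ curl B` satisfy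
`∂ₜB^κ + curl(B^κ × v^κ) = 0`. -/
theorem XMHD_transport_form
    (d : ℝ) (hd : 0 ≤ d)
    (v Bs B : ℝ → E3 → E3) (p : ℝ → E3 → ℝ)
    (hv : ContDiff ℝ (⊤ : ℕ∞) ↿v) (hBs : ContDiff ℝ (⊤ : ℕ∞) ↿Bs) (hB : ContDiff ℝ (⊤ : ℕ∞) ↿B)
    (hp : ContDiff ℝ (⊤ : ℕ∞) ↿p)
    (hdiv_v : ∀ t x, ediv (v t) x = 0)
    (hdiv_Bs : ∀ t x, ediv (Bs t) x = 0)
    (hdiv_B : ∀ t x, ediv (B t) x = 0)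
    (hconst : ∀ t x, Bs t x = B t x + ecurl (ecurl (B t)) x)
    (hmom : ∀ t x,
      tderiv v t x + advect (v t x) (v t) x + egrad (p t) x
        + cross3 (Bs t x) (ecurl (B t) x) = 0)
    (hind : ∀ t x,
      tderiv Bs t x
        + ecurl (fun y => cross3 (Bs t y) (v t y - d • ecurl (B t) y)) x
        + ecurl (fun y => cross3 (ecurl (v t) y) (ecurl (B t) y)) x = 0)
    (κ : ℝ) (hκ : κ^2 = d * κ + 1)
    (Bκ vκ : ℝ → E3 → E3)
    (hBκ : ∀ t x, Bκ t x = Bs t x + κ • ecurl (v t) x)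
    (hvκ : ∀ t x, vκ t x = v t x + κ⁻¹ • ecurl (B t) x) :
    ∀ t x, tderiv Bκ t x + ecurl (fun y => cross3 (Bκ t y) (vκ t y)) x = 0 := by
  intro t x
  -- κ facts
  have hκ0 : κ ≠ 0 := by
    rintro rfl; norm_num at hκ
  have hκinv : κ⁻¹ = κ - d := by
    have h1 : κ * (κ - d) = 1 := by linear_combination hκ
    exact inv_eq_of_mul_eq_one_right h1
  have hκκ : κ * κ⁻¹ = 1 := mul_inv_cancel₀ hκ0
  -- componentwise smoothness
  have cu : ∀ k, ContDiff ℝ (⊤ : ℕ∞) (fun y => v t y k) := contDiff_slice hv t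
  have cb : ∀ k, ContDiff ℝ (⊤ : ℕ∞) (fun y => Bs t y k) := contDiff_slice hBs t
  have cB : ∀ k, ContDiff ℝ (⊤ : ℕ∞) (fun y => B t y k) := contDiff_slice hB t
  have cω : ∀ k, ContDiff ℝ (⊤ : ℕ∞) (fun y => ecurl (v t) y k) := ecurl_comp_contDiff cu
  have cj : ∀ k, ContDiff ℝ (⊤ : ℕ∞) (fun y => ecurl (B t) y k) := ecurl_comp_contDiff cB
  -- the four basic cross fields
  set C1 : E3 → E3 := fun y => cross3 (Bs t y) (v t y) with hC1
  set C2 : E3 → E3 := fun y => cross3 (Bs t y) (ecurl (B t) y) with hC2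
  set C3 : E3 → E3 := fun y => cross3 (ecurl (v t) y) (v t y) with hC3
  set C4 : E3 → E3 := fun y => cross3 (ecurl (v t) y) (ecurl (B t) y) with hC4
  have dC1 : ∀ k, DifferentiableAt ℝ (fun y => C1 y k) x := fun k =>
    (((cross3_comp_contDiff cb cu k)).differentiable (by simp)).differentiableAt
  have dC2 : ∀ k, DifferentiableAt ℝ (fun y => C2 y k) x := fun k =>
    (((cross3_comp_contDiff cb cj k)).differentiable (by simp)).differentiableAt
  have dC3 : ∀ k, DifferentiableAt ℝ (fun y => C3 y k) x := fun k =>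
    (((cross3_comp_contDiff cω cu k)).differentiable (by simp)).differentiableAt
  have dC4 : ∀ k, DifferentiableAt ℝ (fun y => C4 y k) x := fun k =>
    (((cross3_comp_contDiff cω cj k)).differentiable (by simp)).differentiableAt
  -- ### Step 1: expand curl (Bκ × vκ)
  have F4 : ecurl (fun y => cross3 (Bκ t y) (vκ t y)) x
      = ecurl C1 x + κ⁻¹ • ecurl C2 x + κ • ecurl C3 x + (κ * κ⁻¹) • ecurl C4 x := by
    have efun : (fun y => cross3 (Bκ t y) (vκ t y))
        = fun y => (C1 y + κ⁻¹ • C2 y) + (κ • C3 y + (κ * κ⁻¹) • C4 y) := by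
      funext y
      rw [hBκ t y, hvκ t y]
      ext i
      fin_cases i <;>
        simp [hC1, hC2, hC3, hC4, cross3, ecurl] <;> ring
    have dA : ∀ k, DifferentiableAt ℝ (fun y => (C1 y + κ⁻¹ • C2 y) k) x :=
      fun k => (dC1 k).add ((dC2 k).const_smul κ⁻¹)
    have dB : ∀ k, DifferentiableAt ℝ (fun y => (κ • C3 y + (κ * κ⁻¹) • C4 y) k) x :=
      fun k => ((dC3 k).const_smul κ).add ((dC4 k).const_smul (κ * κ⁻¹))
    have dC2s : ∀ k, DifferentiableAt ℝ (fun y => (κ⁻¹ • C2 y) k) x :=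
      fun k => (dC2 k).const_smul κ⁻¹
    have dC3s : ∀ k, DifferentiableAt ℝ (fun y => (κ • C3 y) k) x :=
      fun k => (dC3 k).const_smul κ
    have dC4s : ∀ k, DifferentiableAt ℝ (fun y => ((κ * κ⁻¹) • C4 y) k) x :=
      fun k => (dC4 k).const_smul (κ * κ⁻¹)
    rw [efun, ecurl_add (x := x) dA dB, ecurl_add (x := x) dC1 dC2s,
      ecurl_add (x := x) dC3s dC4s,
      ecurl_smul κ⁻¹ dC2, ecurl_smul κ dC3, ecurl_smul (κ * κ⁻¹) dC4]
    abel
  -- ### Step 2: induction equation gives tderiv Bs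
  have F3 : tderiv Bs t x = -(ecurl C1 x) + d • ecurl C2 x - ecurl C4 x := by
    have h := hind t x
    have efun : (fun y => cross3 (Bs t y) (v t y - d • ecurl (B t) y))
        = fun y => C1 y - d • C2 y := by
      funext y
      ext i
      fin_cases i <;> simp [hC1, hC2, cross3] <;> ring
    have dC2d : ∀ k, DifferentiableAt ℝ (fun y => (d • C2 y) k) x :=
      fun k => (dC2 k).const_smul d
    rw [efun, ecurl_sub (x := x) dC1 dC2d, ecurl_smul d dC2] at h
    have hh : tderiv Bs t x = tderiv Bs t x + (ecurl C1 x - d • ecurl C2 x)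
        + ecurl C4 x - (ecurl C1 x - d • ecurl C2 x) - ecurl C4 x := by abel
    rw [hh, h]
    abel
  -- ### Step 3: momentum equation gives curl of tderiv v
  have dgradq : ∀ k, DifferentiableAt ℝ
      (fun y => egrad (fun z => 2⁻¹ * (v t z 0 * v t z 0 + v t z 1 * v t z 1
        + v t z 2 * v t z 2)) y k) x := by
    have hq : ContDiff ℝ (⊤ : ℕ∞) (fun z => 2⁻¹ * (v t z 0 * v t z 0 + v t z 1 * v t z 1
        + v t z 2 * v t z 2)) :=
      contDiff_const.mul ((((cu 0).mul (cu 0)).add ((cu 1).mul (cu 1))).add ((cu 2).mul (cu 2)))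
    exact fun k => ((egrad_comp_contDiff hq k).differentiable (by simp)).differentiableAt
  have dgradp : ∀ k, DifferentiableAt ℝ (fun y => egrad (p t) y k) x :=
    fun k => ((egrad_comp_contDiff (contDiff_pslice hp t) k).differentiable (by simp)).differentiableAt
  have F2 : ecurl (fun y => tderiv v t y) x = -(ecurl C3 x) - ecurl C2 x := by
    have hq : ContDiff ℝ (⊤ : ℕ∞) (fun z => 2⁻¹ * (v t z 0 * v t z 0 + v t z 1 * v t z 1
        + v t z 2 * v t z 2)) :=
      contDiff_const.mul ((((cu 0).mul (cu 0)).add ((cu 1).mul (cu 1))).add ((cu 2).mul (cu 2)))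
    have efun : (fun y => tderiv v t y)
        = fun y => -(egrad (fun z => 2⁻¹ * (v t z 0 * v t z 0 + v t z 1 * v t z 1
            + v t z 2 * v t z 2)) y + egrad (p t) y) - (C3 y + C2 y) := by
      funext y
      have h := hmom t y
      have ha := advect_eq cu y
      calc tderiv v t y
          = tderiv v t y + advect (v t y) (v t) y + egrad (p t) y
              + cross3 (Bs t y) (ecurl (B t) y)
            - advect (v t y) (v t) y - egrad (p t) y - cross3 (Bs t y) (ecurl (B t) y) := by abel
        _ = 0 - advect (v t y) (v t) y - egrad (p t) y - cross3 (Bs t y) (ecurl (B t) y) := by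
            rw [h]
        _ = -(egrad (fun z => 2⁻¹ * (v t z 0 * v t z 0 + v t z 1 * v t z 1
              + v t z 2 * v t z 2)) y + egrad (p t) y) - (C3 y + C2 y) := by
            rw [ha]; simp only [hC2, hC3]; abel
    have dN : ∀ k, DifferentiableAt ℝ (fun y =>
        (-(egrad (fun z => 2⁻¹ * (v t z 0 * v t z 0 + v t z 1 * v t z 1
          + v t z 2 * v t z 2)) y + egrad (p t) y)) k) x :=
      fun k => ((dgradq k).add (dgradp k)).neg
    have dM : ∀ k, DifferentiableAt ℝ (fun y => (C3 y + C2 y) k) x :=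
      fun k => (dC3 k).add (dC2 k)
    rw [efun, ecurl_sub (x := x) dN dM, ecurl_neg (x := x),
      ecurl_add (x := x) dgradq dgradp, ecurl_add (x := x) dC3 dC2,
      ecurl_grad hq x, ecurl_grad (contDiff_pslice hp t) x]
    abel
  -- ### Step 4: time derivative of Bκ
  have hswap : HasDerivAt (fun s => ecurl (v s) x) (ecurl (fun y => tderiv v t y) x) t := by
    have hG : ∀ k : Fin 3, ContDiff ℝ (⊤ : ℕ∞) (fun q : ℝ × E3 => v q.1 q.2 k) := contDiff_Fk hv
    have key : ∀ (j k : Fin 3), HasDerivAt (fun s => pd j (fun y => v s y k) x)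
        (pd j (fun y => deriv (fun s' => v s' y k) t) x) t := fun j k =>
      swap_core (hG k) t x j
    have e2 : ∀ (j k : Fin 3), pd j (fun y => deriv (fun s' => v s' y k) t) x
        = pd j (fun y => tderiv v t y k) x := by
      intro j k
      congr 1
      funext y
      rw [deriv_comp_proj (((contDiff_tslice hv y).differentiable (by simp)).differentiableAt) k]
      rfl
    have h0 : HasDerivAt (fun s => ecurl (v s) x)
        ((pd 1 (fun y => tderiv v t y 2) x - pd 2 (fun y => tderiv v t y 1) x)
            • EuclideanSpace.single (0 : Fin 3) (1 : ℝ)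
          + (pd 2 (fun y => tderiv v t y 0) x - pd 0 (fun y => tderiv v t y 2) x)
            • EuclideanSpace.single 1 1
          + (pd 0 (fun y => tderiv v t y 1) x - pd 1 (fun y => tderiv v t y 0) x)
            • EuclideanSpace.single 2 1) t := by
      have e0 : (fun s => ecurl (v s) x) = fun s =>
          (pd 1 (fun y => v s y 2) x - pd 2 (fun y => v s y 1) x)
              • EuclideanSpace.single (0 : Fin 3) (1 : ℝ)
            + (pd 2 (fun y => v s y 0) x - pd 0 (fun y => v s y 2) x)
              • EuclideanSpace.single 1 1
            + (pd 0 (fun y => v s y 1) x - pd 1 (fun y => v s y 0) x)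
              • EuclideanSpace.single 2 1 := by
        funext s
        rw [show ecurl (v s) x = mk3 _ _ _ from rfl, mk3_eq_single]
      rw [e0]
      exact ((((key 1 2).sub (key 2 1)).smul_const _).add
        ((((key 2 0).sub (key 0 2)).smul_const _))).add
        ((((key 0 1).sub (key 1 0)).smul_const _)) |>.congr_deriv (by
          rw [e2 1 2, e2 2 1, e2 2 0, e2 0 2, e2 0 1, e2 1 0])
    have : ecurl (fun y => tderiv v t y) x = (pd 1 (fun y => tderiv v t y 2) x
        - pd 2 (fun y => tderiv v t y 1) x) • EuclideanSpace.single (0 : Fin 3) (1 : ℝ)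
          + (pd 2 (fun y => tderiv v t y 0) x - pd 0 (fun y => tderiv v t y 2) x)
            • EuclideanSpace.single 1 1
          + (pd 0 (fun y => tderiv v t y 1) x - pd 1 (fun y => tderiv v t y 0) x)
            • EuclideanSpace.single 2 1 := by
      rw [show ecurl (fun y => tderiv v t y) x = mk3 _ _ _ from rfl, mk3_eq_single]
    rw [this]
    exact h0
  have hBst : DifferentiableAt ℝ (fun s => Bs s x) t :=
    ((contDiff_tslice hBs x).differentiable (by simp)).differentiableAt
  have F1 : tderiv Bκ t x = tderiv Bs t x + κ • ecurl (fun y => tderiv v t y) x := by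
    have hfun : (fun s => Bκ s x) = fun s => Bs s x + κ • ecurl (v s) x :=
      funext fun s => hBκ s x
    show deriv (fun s => Bκ s x) t = _
    rw [hfun]
    have h := (hBst.hasDerivAt.fun_add (hswap.fun_const_smul κ)).deriv
    rw [h]
    rfl
  -- ### Final assembly
  rw [F1, F2, F3, F4, hκκ, hκinv]
  module
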